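/- For every positive integer n, the polynomials h_n and g_{2n} satisfy h_n(x)² = g_{2n}(x) as polynomials, i.e., (2n+1)²·(1-x)·h_n(x)² = 1 - T_{2n+1}(x) for all x, where h_n(x) = (1/(2n+1))·(1 + 2·∑_{k=1}^{n} T_k(x)). -/

import Mathlib

/-! Writing `D_n = 1 + 2 ∑_{k=1}^n T_k` (the Dirichlet kernel in the variable `x = cos ξ`), the
recurrence `T_{k+1} + T_{k-1} = 2 X T_k` telescopes `(1 - X) D_n` to `T_n - T_{n+1}`. Induction on `n`
then gives `(1 - X) D_n² = 1 - T_{2n+1}`, the step reducing, via the product formula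
`2 T_a T_b = T_{a+b} + T_{a-b}`, to the same recurrence at `k = 2n + 2`. -/

open Polynomial Polynomial.Chebyshev

namespace Polynomial.Chebyshev

variable (R : Type*) [CommRing R]

theorem two_mul_T_succ_mul_T (n : ℤ) : 2 * T R (n + 1) * T R n = T R (2 * n + 1) + X := by
  rw [T_mul_T, show n + 1 + n = 2 * n + 1 by ring, show n + 1 - n = 1 by ring, T_one]

theorem two_mul_T_sq (n : ℤ) : 2 * T R n ^ 2 = T R (2 * n) + 1 := by
  rw [sq, ← mul_assoc, T_mul_T, ← two_mul, sub_self, T_zero]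

noncomputable def dirichletKernel (n : ℕ) : R[X] :=
  1 + 2 * ∑ k ∈ Finset.Icc 1 n, T R k

theorem dirichletKernel_zero : dirichletKernel R 0 = 1 := by
  simp [dirichletKernel]

theorem dirichletKernel_succ (n : ℕ) :
    dirichletKernel R (n + 1) = dirichletKernel R n + 2 * T R (n + 1) := by
  rw [dirichletKernel, dirichletKernel, Finset.sum_Icc_succ_top (by omega)]
  push_cast
  ring

theorem one_sub_X_mul_dirichletKernel (n : ℕ) :
    (1 - X) * dirichletKernel R n = T R n - T R (n + 1) := by
  induction n with
  | zero => simp [dirichletKernel_zero]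
  | succ m ih =>
    rw [dirichletKernel_succ]
    push_cast
    rw [show (m : ℤ) + 1 + 1 = m + 2 by ring]
    linear_combination ih + T_add_two R m

theorem one_sub_X_mul_dirichletKernel_sq (n : ℕ) :
    (1 - X) * dirichletKernel R n ^ 2 = 1 - T R (2 * n + 1) := by
  induction n with
  | zero => simp [dirichletKernel_zero]
  | succ m ih =>
    have hrec := T_add_one R (2 * (m + 1))
    rw [show 2 * ((m : ℤ) + 1) - 1 = 2 * m + 1 by ring] at hrec
    rw [dirichletKernel_succ]
    push_cast
    linear_combination ih + 4 * T R (m + 1) * one_sub_X_mul_dirichletKernel R m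
      + 2 * two_mul_T_succ_mul_T R m - 2 * X * two_mul_T_sq R (m + 1) + hrec

end Polynomial.Chebyshev

theorem dirichlet_squared_is_fejer
    (n : ℕ) :
    ∀ x : ℝ,
      (2 * (n : ℝ) + 1) ^ 2 * (1 - x) *
          ((Polynomial.C ((2 * (n : ℝ) + 1)⁻¹) *
              (1 + 2 * ∑ k ∈ Finset.Icc 1 n, Polynomial.Chebyshev.T ℝ (k : ℤ))).eval x) ^ 2 =
        1 - (Polynomial.Chebyshev.T ℝ (2 * (n : ℤ) + 1)).eval x := by
  intro x
  have hsq := congrArg (eval x) (one_sub_X_mul_dirichletKernel_sq ℝ n)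
  simp only [dirichletKernel, eval_mul, eval_sub, eval_one, eval_X, eval_pow] at hsq
  have hne : (2 * (n : ℝ) + 1) ≠ 0 := by positivity
  rw [eval_mul, eval_C, ← hsq]
  field_simp
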